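/- arXiv:1103.5894 — 4 statements merged into one kernel-verified Lean document; each statement's English description precedes it below -/
import Mathlib

section
/- Let W satisfy conditions (A.3) and (A.4) with constants M > 0, 0 ≤ q < 1/2, p < 1, and let μ(W) = ∫₀¹ W(x) log(1/x) dx. Then the Riemann sum T_n^{(1,1)} = (1/(k−1)) Σ_{i=1}^{k−1} W(i/k) log(k/i) satisfies T_n^{(1,1)} = μ(W) + O(k^{q−1} log k) as k → ∞; that is, there exists a constant C such that |T_n^{(1,1)} − μ(W)| ≤ C k^{q−1} log k for all k ≥ 2. -/
open MeasureTheory ProbabilityTheory Filter Set Topology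

/-- `K_ρ(λ) = ∫₁^λ u^{ρ-1} du`. -/
noncomputable def Kfun (ρ l : ℝ) : ℝ := ∫ u in (1:ℝ)..l, u ^ (ρ - 1)

/-- A function is slowly varying at infinity. -/
def SlowlyVarying (ℓ : ℝ → ℝ) : Prop :=
  ∀ l : ℝ, 0 < l → Tendsto (fun t => ℓ (l * t) / ℓ t) atTop (𝓝 1)

/-- Second-order condition (A.2): `log(ℓ(λt)/ℓ(t)) ∼ b(t) K_ρ(λ)` locally uniformly in `λ > 1`,
with `b(t) → 0`. -/
def SecondOrder (ℓ b : ℝ → ℝ) (ρ : ℝ) : Prop :=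
  Tendsto b atTop (𝓝 0) ∧
  ∀ a c : ℝ, 1 < a → a ≤ c → ∀ ε : ℝ, 0 < ε →
    ∀ᶠ t : ℝ in atTop, ∀ l ∈ Set.Icc a c,
      |Real.log (ℓ (l * t) / ℓ t) - b t * Kfun ρ l| ≤ ε * |b t * Kfun ρ l|

/-- Failure rate `H = −log(1−F)`. -/
noncomputable def hazard (F : ℝ → ℝ) (x : ℝ) : ℝ := - Real.log (1 - F x)

/-- Generalized inverse of the failure rate, `H⁻(t) = inf{x : H(x) ≥ t}`. -/
noncomputable def hazardInv (F : ℝ → ℝ) (t : ℝ) : ℝ := sInf {x : ℝ | t ≤ hazard F x}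

/-- `i`-th order statistic of the sample `x 1, …, x n`. -/
noncomputable def orderStat (n : ℕ) (x : ℕ → ℝ) (i : ℕ) : ℝ :=
  sInf {t : ℝ | i ≤ ((Finset.Icc 1 n).filter (fun j => x j ≤ t)).card}

/-- Intermediate sequence: `k_n → ∞` and `k_n/n → 0`. -/
def IsIntermediate (k : ℕ → ℕ) : Prop :=
  Tendsto k atTop atTop ∧ Tendsto (fun n => (k n : ℝ) / n) atTop (𝓝 0)

/-- `μ(W) = ∫₀¹ W(x) log(1/x) dx`. -/
noncomputable def muW (W : ℝ → ℝ) : ℝ := ∫ x in (0:ℝ)..1, W x * Real.log (1 / x)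

/-- `σ²(W) = ∫₀¹∫₀¹ W(x)W(y)(min(x,y)−xy)/(xy) dx dy`. -/
noncomputable def sigmaSqW (W : ℝ → ℝ) : ℝ :=
  ∫ x in (0:ℝ)..1, ∫ y in (0:ℝ)..1, W x * W y * (min x y - x * y) / (x * y)

/-- `‖ε‖_{n,∞} = max_{1 ≤ i ≤ k−1} |ε_i|`. -/
noncomputable def epsNorm (k : ℕ) (e : ℕ → ℝ) : ℝ :=
  sSup ((fun i => |e i|) '' Set.Icc 1 (k - 1))

/-- The estimator `θ̂_n(α)` built from weights `α` and the sample `x`. -/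
noncomputable def thetaHat (n k : ℕ) (α : ℕ → ℝ) (x : ℕ → ℝ) : ℝ :=
  (∑ i ∈ Finset.Icc 1 (k - 1), α i *
      (Real.log (orderStat n x (n - i + 1)) - Real.log (orderStat n x (n - k + 1)))) /
  (∑ i ∈ Finset.Icc 1 (k - 1), α i *
      (Real.log (Real.log ((n : ℝ) / i)) - Real.log (Real.log ((n : ℝ) / k))))

/-- Convergence in distribution of real random variables towards the law `μ`. -/
def TendstoInDistribution {Ω : Type*} [MeasurableSpace Ω] (P : Measure Ω)
    (Y : ℕ → Ω → ℝ) (μ : Measure ℝ) : Prop :=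
  ∀ f : BoundedContinuousFunction ℝ ℝ,
    Tendsto (fun n => ∫ ω, f (Y n ω) ∂P) atTop (𝓝 (∫ x, f x ∂μ))

/-- The family `X` is i.i.d. with common cumulative distribution function `F`. -/
def IIDWithCdf {Ω : Type*} [MeasurableSpace Ω] (P : Measure Ω) (X : ℕ → Ω → ℝ)
    (F : ℝ → ℝ) : Prop :=
  (∀ i, Measurable (X i)) ∧ iIndepFun X P ∧
  ∀ i t, P {ω | X i ω ≤ t} = ENNReal.ofReal (F t)

/-- Cdf of the standard exponential distribution. -/
noncomputable def ExpCdf (t : ℝ) : ℝ := if 0 ≤ t then 1 - Real.exp (-t) else 0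

/-- Boundedness in probability (`O_P(1)`). -/
def BoundedInProbability {Ω : Type*} [MeasurableSpace Ω] (P : Measure Ω)
    (Y : ℕ → Ω → ℝ) : Prop :=
  ∀ δ : ℝ, 0 < δ → ∃ C : ℝ, ∀ᶠ n in atTop, (P {ω | C < |Y n ω|}).toReal < δ

/-!
Put `f x = W x * log (1 / x)`, so that the sum is `(1/(k-1)) ∑ f (i/k)` and `μ(W) = ∫₀¹ f`.
Since `|f x| ≤ M x^{-q} log (1/x)`, every term is `O(k^q log k)`, so replacing `1/(k-1)` by `1/k`
costs `O(k^{q-1} log k)`, and so does the integral over `[0, 1/k]` (scale `x = y/k`).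
On `[1/k, 1]`, `log (1/x) ≤ x^{p-1}/(1-p)` gives `|f' x| ≤ K x^{-(q+1)}`, so by the mean value
theorem the left-endpoint rule on the cell `[i/k, (i+1)/k]` errs by at most `K k^{q-1} / i`;
the harmonic sum turns this into `O(k^{q-1} log k)`.
-/

lemma log_one_div_nonneg {x : ℝ} (hx0 : 0 < x) (hx1 : x ≤ 1) : 0 ≤ Real.log (1 / x) :=
  Real.log_nonneg (one_le_one_div hx0 hx1)

lemma rpow_mul_log_one_div_nonneg {x : ℝ} (a : ℝ) (hx0 : 0 ≤ x) (hx1 : x ≤ 1) :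
    0 ≤ x ^ a * Real.log (1 / x) := by
  rcases hx0.eq_or_lt with rfl | hx0
  · simp
  · exact mul_nonneg (Real.rpow_nonneg hx0.le a) (log_one_div_nonneg hx0 hx1)

lemma log_one_div_le_rpow_neg_div {x ε : ℝ} (hx : 0 < x) (hε : 0 < ε) :
    Real.log (1 / x) ≤ x ^ (-ε) / ε := by
  simpa [Real.inv_rpow hx.le, Real.rpow_neg hx.le] using
    Real.log_le_rpow_div (one_div_pos.2 hx).le hε

lemma rpow_neg_mul_log_one_div_le {x c q : ℝ} (hq : 0 ≤ q) (hc : 0 < c) (hcx : 1 / c ≤ x)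
    (hx1 : x ≤ 1) : x ^ (-q) * Real.log (1 / x) ≤ c ^ q * Real.log c := by
  have hx0 : 0 < x := (one_div_pos.2 hc).trans_le hcx
  have hxc : 1 / x ≤ c := by rwa [one_div_le hx0 hc]
  gcongr
  · exact log_one_div_nonneg hx0 hx1
  · rw [Real.rpow_neg hx0.le, ← Real.inv_rpow hx0.le, ← one_div]
    gcongr

lemma le_div_log_two_mul_log {A x : ℝ} (hA : 0 ≤ A) (hx : 2 ≤ x) :
    A ≤ A / Real.log 2 * Real.log x := by
  rw [div_mul_eq_mul_div, le_div_iff₀ (Real.log_pos one_lt_two)]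
  exact mul_le_mul_of_nonneg_left (Real.log_le_log two_pos hx) hA

lemma sum_Icc_inv_le_one_add_log (n : ℕ) :
    ∑ i ∈ Finset.Icc 1 n, (i : ℝ)⁻¹ ≤ 1 + Real.log n := by
  simpa [harmonic_eq_sum_Icc] using harmonic_le_one_add_log n

lemma intervalIntegrable_rpow_mul_log_one_div {a : ℝ} (ha : -1 < a) :
    IntervalIntegrable (fun x : ℝ => x ^ a * Real.log (1 / x)) volume 0 1 := by
  set ε := (a + 1) / 2
  have hε : 0 < ε := by simp only [ε]; linarith
  have hdom : IntervalIntegrable (fun x : ℝ => x ^ (a - ε) / ε) volume 0 1 :=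
    (intervalIntegral.intervalIntegrable_rpow' (by simp only [ε]; linarith)).div_const ε
  refine hdom.mono_fun' ?_ ?_
  · refine ContinuousOn.aestronglyMeasurable (fun x hx => ?_) measurableSet_uIoc
    rw [uIoc_of_le zero_le_one] at hx
    have hx0 : x ≠ 0 := hx.1.ne'
    exact ContinuousAt.continuousWithinAt (by fun_prop (disch := simp [hx0]))
  · rw [uIoc_of_le zero_le_one]
    filter_upwards [ae_restrict_mem measurableSet_Ioc] with x ⟨hx0, hx1⟩
    rw [Real.norm_of_nonneg (rpow_mul_log_one_div_nonneg a hx0.le hx1)]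
    calc x ^ a * Real.log (1 / x) ≤ x ^ a * (x ^ (-ε) / ε) :=
          mul_le_mul_of_nonneg_left (log_one_div_le_rpow_neg_div hx0 hε) (by positivity)
      _ = x ^ (a - ε) / ε := by rw [sub_eq_add_neg, Real.rpow_add hx0, mul_div_assoc]

lemma integral_zero_one_div_rpow_mul_log_one_div {q c : ℝ} (hq : q < 1) (hc : 0 < c) :
    ∫ x in (0:ℝ)..1 / c, x ^ (-q) * Real.log (1 / x) =
      c ^ (q - 1) * (Real.log c / (1 - q) + ∫ y in (0:ℝ)..1, y ^ (-q) * Real.log (1 / y)) := by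
  have hpow : IntervalIntegrable (fun y : ℝ => y ^ (-q)) volume 0 1 :=
    intervalIntegral.intervalIntegrable_rpow' (by linarith)
  have hscale : ∀ y ∈ uIoc (0:ℝ) 1, (y / c) ^ (-q) * Real.log (1 / (y / c)) =
      c ^ q * (y ^ (-q) * Real.log c + y ^ (-q) * Real.log (1 / y)) := by
    intro y hy
    rw [uIoc_of_le zero_le_one] at hy
    rw [Real.div_rpow hy.1.le hc.le, Real.rpow_neg hc.le, one_div_div,
      Real.log_div hc.ne' hy.1.ne', one_div, Real.log_inv]
    field_simp
    ring
  have key := intervalIntegral.integral_comp_div (fun x : ℝ => x ^ (-q) * Real.log (1 / x))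
    hc.ne' (a := 0) (b := 1)
  rw [intervalIntegral.integral_congr_ae (.of_forall hscale), zero_div,
    intervalIntegral.integral_const_mul, intervalIntegral.integral_add (hpow.mul_const _)
      (intervalIntegrable_rpow_mul_log_one_div (by linarith)),
    intervalIntegral.integral_mul_const, integral_rpow (.inl (by linarith)), smul_eq_mul,
    Real.one_rpow, Real.zero_rpow (by linarith), sub_zero, neg_add_eq_sub] at key
  rw [Real.rpow_sub_one hc.ne', ← mul_right_inj' hc.ne', ← key]
  field_simp

lemma abs_mul_sub_integral_le_of_hasDerivAt {f f' : ℝ → ℝ} {a b C : ℝ} (hab : a ≤ b)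
    (hf : ∀ x ∈ Ico a b, HasDerivAt f (f' x) x) (hf' : ∀ x ∈ Ico a b, |f' x| ≤ C)
    (hint : IntervalIntegrable f volume a b) :
    |(b - a) * f a - ∫ x in a..b, f x| ≤ C * (b - a) ^ 2 := by
  have hlip : ∀ x ∈ Ico a b, |f a - f x| ≤ C * (b - a) := fun x hx => by
    have hmvt := Convex.norm_image_sub_le_of_norm_hasDerivWithin_le
      (fun y hy => (hf y hy).hasDerivWithinAt) hf' (convex_Ico a b)
      ⟨le_rfl, hx.1.trans_lt hx.2⟩ hx
    rw [Real.norm_eq_abs, Real.norm_eq_abs, abs_sub_comm, abs_of_nonneg (sub_nonneg.2 hx.1)] at hmvt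
    exact hmvt.trans
      (mul_le_mul_of_nonneg_left (by linarith [hx.2]) ((abs_nonneg _).trans (hf' x hx)))
  have hsub : (b - a) * f a - ∫ x in a..b, f x = ∫ x in a..b, (f a - f x) := by
    rw [intervalIntegral.integral_sub intervalIntegrable_const hint,
      intervalIntegral.integral_const, smul_eq_mul]
  rw [hsub, ← Real.norm_eq_abs]
  calc _ ≤ C * (b - a) * |b - a| := by
        refine intervalIntegral.norm_integral_le_of_norm_le_const_ae ?_
        filter_upwards [volume.ae_ne b] with x hxb hx
        rw [uIoc_of_le hab] at hx
        exact hlip x ⟨hx.1.le, lt_of_le_of_ne hx.2 hxb⟩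
    _ = C * (b - a) ^ 2 := by rw [abs_of_nonneg (sub_nonneg.2 hab)]; ring

section WeightedIntegrand

variable {f f' : ℝ → ℝ} {M K q : ℝ}

lemma intervalIntegrable_of_abs_le_rpow_mul_log_one_div (hq : q < 1)
    (hf : ContinuousOn f (Ioo 0 1))
    (hle : ∀ x ∈ Ioo (0:ℝ) 1, |f x| ≤ M * (x ^ (-q) * Real.log (1 / x))) :
    IntervalIntegrable f volume 0 1 := by
  rw [intervalIntegrable_iff_integrableOn_Ioo_of_le zero_le_one]
  have hdom := (intervalIntegrable_rpow_mul_log_one_div (a := -q) (by linarith)).const_mul M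
  rw [intervalIntegrable_iff_integrableOn_Ioo_of_le zero_le_one] at hdom
  refine hdom.mono' (hf.aestronglyMeasurable measurableSet_Ioo) ?_
  filter_upwards [ae_restrict_mem measurableSet_Ioo] with x hx using hle x hx

lemma abs_integral_zero_one_div_le {c : ℝ} (hq : q < 1) (hc : 1 < c)
    (hle : ∀ x ∈ Ioo (0:ℝ) 1, |f x| ≤ M * (x ^ (-q) * Real.log (1 / x))) :
    |∫ x in (0:ℝ)..1 / c, f x| ≤ M * (c ^ (q - 1) *
      (Real.log c / (1 - q) + ∫ y in (0:ℝ)..1, y ^ (-q) * Real.log (1 / y))) := by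
  have hc0 : 0 < c := one_pos.trans hc
  have hc1 : 1 / c < 1 := (div_lt_one hc0).2 hc
  rw [← integral_zero_one_div_rpow_mul_log_one_div hq hc0,
    ← intervalIntegral.integral_const_mul, ← Real.norm_eq_abs]
  refine intervalIntegral.norm_integral_le_of_norm_le (by positivity) ?_ ?_
  · filter_upwards with x hx using hle x ⟨hx.1, hx.2.trans_lt hc1⟩
  · exact ((intervalIntegrable_rpow_mul_log_one_div (by linarith)).const_mul M).mono_set
      (uIcc_subset_uIcc left_mem_uIcc (mem_uIcc_of_le (by positivity) hc1.le))

lemma abs_sum_Icc_apply_div_le (hM : 0 ≤ M) (hq : 0 ≤ q)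
    (hle : ∀ x ∈ Ioo (0:ℝ) 1, |f x| ≤ M * (x ^ (-q) * Real.log (1 / x)))
    {k : ℕ} (hk : 0 < k) :
    |∑ i ∈ Finset.Icc 1 (k - 1), f (i / k)| ≤ ((k : ℝ) - 1) * (M * k ^ q * Real.log k) := by
  have hk0 : (0 : ℝ) < k := Nat.cast_pos.2 hk
  have hterm : ∀ i ∈ Finset.Icc 1 (k - 1), |f (i / k)| ≤ M * k ^ q * Real.log k := by
    intro i hi
    rw [Finset.mem_Icc] at hi
    have hi1 : (1 : ℝ) ≤ i := by exact_mod_cast hi.1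
    have hik : (i : ℝ) < k := by exact_mod_cast (show i < k by omega)
    refine (hle _ ⟨by positivity, (div_lt_one hk0).2 hik⟩).trans ?_
    rw [mul_assoc]
    exact mul_le_mul_of_nonneg_left (rpow_neg_mul_log_one_div_le hq hk0
      (div_le_div_of_nonneg_right hi1 hk0.le) ((div_le_one hk0).2 hik.le)) hM
  calc _ ≤ ∑ i ∈ Finset.Icc 1 (k - 1), |f (i / k)| := Finset.abs_sum_le_sum_abs _ _
    _ ≤ ∑ _i ∈ Finset.Icc 1 (k - 1), M * k ^ q * Real.log k := Finset.sum_le_sum hterm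
    _ = ((k : ℝ) - 1) * (M * k ^ q * Real.log k) := by
      rw [Finset.sum_const, Nat.card_Icc, nsmul_eq_mul, Nat.add_sub_cancel,
        Nat.cast_sub (by omega), Nat.cast_one]

lemma abs_mul_apply_div_sub_integral_le (hK : 0 ≤ K) (hq : 0 ≤ q)
    (hf : ∀ x ∈ Ioo (0:ℝ) 1, HasDerivAt f (f' x) x)
    (hf' : ∀ x ∈ Ioo (0:ℝ) 1, |f' x| ≤ K * x ^ (-(q + 1)))
    {i k : ℕ} (hi : 1 ≤ i) (hik : i < k)
    (hint : IntervalIntegrable f volume ((i : ℝ) / k) ((i + 1 : ℕ) / k)) :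
    |1 / (k : ℝ) * f (i / k) - ∫ x in (i / k : ℝ)..((i + 1 : ℕ) / k), f x| ≤
      K * (k : ℝ) ^ (q - 1) * (i : ℝ)⁻¹ := by
  have hk0 : (0 : ℝ) < k := Nat.cast_pos.2 (by omega)
  have hi1 : (1 : ℝ) ≤ i := by exact_mod_cast hi
  have hi0 : (0 : ℝ) < i / k := by positivity
  have hik1 : ((i + 1 : ℕ) : ℝ) / k ≤ 1 := (div_le_one hk0).2 (by exact_mod_cast hik)
  have hlen : ((i + 1 : ℕ) : ℝ) / k - i / k = 1 / k := by push_cast; ring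
  have hcell := abs_mul_sub_integral_le_of_hasDerivAt (f := f) (f' := f')
    (C := K * ((i : ℝ) / k) ^ (-(q + 1))) (by rw [← sub_nonneg, hlen]; positivity)
    (fun x hx => hf x ⟨hi0.trans_le hx.1, hx.2.trans_le hik1⟩)
    (fun x hx => (hf' x ⟨hi0.trans_le hx.1, hx.2.trans_le hik1⟩).trans
      (mul_le_mul_of_nonneg_left (Real.rpow_le_rpow_of_nonpos hi0 hx.1 (by linarith)) hK)) hint
  rw [hlen] at hcell
  calc _ ≤ K * ((i : ℝ) / k) ^ (-(q + 1)) * (1 / k) ^ 2 := hcell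
    _ = K * (k : ℝ) ^ (q - 1) * (i : ℝ) ^ (-(q + 1)) := by
      rw [Real.div_rpow (by positivity) hk0.le, Real.rpow_neg hk0.le, Real.rpow_add_one hk0.ne',
        Real.rpow_sub_one hk0.ne']
      field_simp
    _ ≤ K * (k : ℝ) ^ (q - 1) * (i : ℝ)⁻¹ := by
      rw [← Real.rpow_neg_one]
      gcongr
      linarith

lemma abs_mul_sum_sub_integral_one_div_le (hK : 0 ≤ K) (hq : 0 ≤ q)
    (hf : ∀ x ∈ Ioo (0:ℝ) 1, HasDerivAt f (f' x) x)
    (hf' : ∀ x ∈ Ioo (0:ℝ) 1, |f' x| ≤ K * x ^ (-(q + 1)))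
    (hint : IntervalIntegrable f volume 0 1) {k : ℕ} (hk : 0 < k) :
    |1 / (k : ℝ) * ∑ i ∈ Finset.Icc 1 (k - 1), f (i / k) - ∫ x in 1 / (k : ℝ)..1, f x| ≤
      K * (k : ℝ) ^ (q - 1) * (1 + Real.log k) := by
  have hk0 : (0 : ℝ) < k := Nat.cast_pos.2 hk
  have hIcc : Finset.Icc 1 (k - 1) = Finset.Ico 1 k :=
    Finset.Icc_sub_one_right_eq_Ico_of_not_isMin (by simpa using hk.ne') 1
  have hnode : ∀ i ≤ k, (i : ℝ) / k ∈ uIcc 0 1 := fun i hi =>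
    mem_uIcc_of_le (by positivity) ((div_le_one hk0).2 (by exact_mod_cast hi))
  have hint_cell : ∀ i ∈ Finset.Ico 1 k,
      IntervalIntegrable f volume ((i : ℝ) / k) ((i + 1 : ℕ) / k) := fun i hi =>
    hint.mono_set (uIcc_subset_uIcc (hnode i (Finset.mem_Ico.1 hi).2.le)
      (hnode (i + 1) (Finset.mem_Ico.1 hi).2))
  have hsum_int : ∑ i ∈ Finset.Ico 1 k, ∫ x in (i / k : ℝ)..((i + 1 : ℕ) / k), f x =
      ∫ x in 1 / (k : ℝ)..1, f x := by
    simpa [div_self hk0.ne'] using intervalIntegral.sum_integral_adjacent_intervals_Ico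
      (a := fun i : ℕ => (i : ℝ) / k) (m := 1) hk fun i hi => hint_cell i (Finset.mem_Ico.2 hi)
  rw [hIcc, ← hsum_int, Finset.mul_sum, ← Finset.sum_sub_distrib]
  calc _ ≤ ∑ i ∈ Finset.Ico 1 k, K * (k : ℝ) ^ (q - 1) * (i : ℝ)⁻¹ :=
        (Finset.abs_sum_le_sum_abs _ _).trans <| Finset.sum_le_sum fun i hi =>
          abs_mul_apply_div_sub_integral_le hK hq hf hf' (Finset.mem_Ico.1 hi).1
            (Finset.mem_Ico.1 hi).2 (hint_cell i hi)
    _ ≤ K * (k : ℝ) ^ (q - 1) * (1 + Real.log k) := by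
      rw [← Finset.mul_sum, ← hIcc]
      refine mul_le_mul_of_nonneg_left ?_ (by positivity)
      exact (Finset.sum_le_sum_of_subset_of_nonneg (Finset.Icc_subset_Icc_right (Nat.sub_le k 1))
        (fun i _ _ => by positivity)).trans (sum_Icc_inv_le_one_add_log k)

lemma abs_riemann_sum_sub_integral_le (hM : 0 ≤ M) (hK : 0 ≤ K) (hq0 : 0 ≤ q) (hq1 : q < 1)
    (hf : ∀ x ∈ Ioo (0:ℝ) 1, HasDerivAt f (f' x) x)
    (hf' : ∀ x ∈ Ioo (0:ℝ) 1, |f' x| ≤ K * x ^ (-(q + 1)))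
    (hle : ∀ x ∈ Ioo (0:ℝ) 1, |f x| ≤ M * (x ^ (-q) * Real.log (1 / x)))
    {k : ℕ} (hk : 2 ≤ k) :
    |1 / ((k : ℝ) - 1) * ∑ i ∈ Finset.Icc 1 (k - 1), f (i / k) - ∫ x in (0:ℝ)..1, f x| ≤
      (k : ℝ) ^ (q - 1) * ((M + K + M / (1 - q)) * Real.log k +
        (K + M * ∫ y in (0:ℝ)..1, y ^ (-q) * Real.log (1 / y))) := by
  have hint : IntervalIntegrable f volume 0 1 :=
    intervalIntegrable_of_abs_le_rpow_mul_log_one_div hq1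
      (fun x hx => (hf x hx).continuousAt.continuousWithinAt) hle
  have hk2 : (2 : ℝ) ≤ k := by exact_mod_cast hk
  have hkk : (0 : ℝ) < k * (k - 1) := by nlinarith
  have hnode : 1 / (k : ℝ) ∈ uIcc 0 1 :=
    mem_uIcc_of_le (by positivity) ((div_le_one (by linarith)).2 (by linarith))
  set S := ∑ i ∈ Finset.Icc 1 (k - 1), f (i / k)
  have hE1 : |S / (k * (k - 1))| ≤ M * (k : ℝ) ^ (q - 1) * Real.log k := by
    rw [abs_div, abs_of_pos hkk, div_le_iff₀ hkk]
    refine (abs_sum_Icc_apply_div_le hM hq0 hle (by omega)).trans (le_of_eq ?_)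
    rw [Real.rpow_sub_one (by positivity)]
    field_simp
  have hE2 := abs_mul_sum_sub_integral_one_div_le hK hq0 hf hf' hint (k := k) (by omega)
  have hE3 := abs_integral_zero_one_div_le (f := f) hq1 (c := k) (by linarith) hle
  have hdecomp : 1 / ((k : ℝ) - 1) * S - ∫ x in (0:ℝ)..1, f x = S / (k * (k - 1)) +
      (1 / k * S - ∫ x in 1 / (k : ℝ)..1, f x) - ∫ x in (0:ℝ)..1 / k, f x := by
    have hk1 : (k : ℝ) - 1 ≠ 0 := by linarith
    rw [← intervalIntegral.integral_add_adjacent_intervals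
      (hint.mono_set (uIcc_subset_uIcc left_mem_uIcc hnode))
      (hint.mono_set (uIcc_subset_uIcc hnode right_mem_uIcc))]
    field_simp
    ring
  rw [hdecomp]
  calc _ ≤ |S / (k * (k - 1))| + |1 / k * S - ∫ x in 1 / (k : ℝ)..1, f x| +
        |∫ x in (0:ℝ)..1 / k, f x| := (abs_sub _ _).trans (add_le_add (abs_add_le _ _) le_rfl)
    _ ≤ _ := add_le_add_three hE1 hE2 hE3
    _ = _ := by ring

lemma exists_abs_riemann_sum_sub_integral_le (hM : 0 ≤ M) (hK : 0 ≤ K) (hq0 : 0 ≤ q)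
    (hq1 : q < 1) (hf : ∀ x ∈ Ioo (0:ℝ) 1, HasDerivAt f (f' x) x)
    (hf' : ∀ x ∈ Ioo (0:ℝ) 1, |f' x| ≤ K * x ^ (-(q + 1)))
    (hle : ∀ x ∈ Ioo (0:ℝ) 1, |f x| ≤ M * (x ^ (-q) * Real.log (1 / x))) :
    ∃ C : ℝ, ∀ k : ℕ, 2 ≤ k →
      |1 / ((k : ℝ) - 1) * ∑ i ∈ Finset.Icc 1 (k - 1), f (i / k) -
          ∫ x in (0:ℝ)..1, f x| ≤ C * (k : ℝ) ^ (q - 1) * Real.log k := by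
  set I := ∫ y in (0:ℝ)..1, y ^ (-q) * Real.log (1 / y)
  have hI : 0 ≤ I := intervalIntegral.integral_nonneg zero_le_one fun y hy =>
    rpow_mul_log_one_div_nonneg _ hy.1 hy.2
  have hq' : 0 < 1 - q := by linarith
  refine ⟨M + K + M / (1 - q) + (K + M * I) / Real.log 2, fun k hk =>
    (abs_riemann_sum_sub_integral_le hM hK hq0 hq1 hf hf' hle hk).trans ?_⟩
  have hk2 : (2 : ℝ) ≤ k := by exact_mod_cast hk
  calc _ ≤ (k : ℝ) ^ (q - 1) *
          ((M + K + M / (1 - q)) * Real.log k + (K + M * I) / Real.log 2 * Real.log k) := by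
        gcongr
        exact le_div_log_two_mul_log (by positivity) hk2
    _ = (M + K + M / (1 - q) + (K + M * I) / Real.log 2) * (k : ℝ) ^ (q - 1) * Real.log k := by
        ring

end WeightedIntegrand

lemma HasDerivAt.mul_log_one_div {W : ℝ → ℝ} {w x : ℝ} (hW : HasDerivAt W w x)
    (hx : x ≠ 0) :
    HasDerivAt (fun y => W y * Real.log (1 / y)) (w * Real.log (1 / x) - W x / x) x := by
  have hlog : HasDerivAt (fun y : ℝ => Real.log (1 / y)) (-x⁻¹) x := by
    simp only [one_div]
    convert (hasDerivAt_inv hx).log (inv_ne_zero hx) using 1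
    field_simp
  exact (hW.mul hlog).congr_deriv (by rw [div_eq_mul_inv]; ring)

lemma abs_mul_log_one_div_sub_div_le {u v x M p q : ℝ} (hx0 : 0 < x) (hx1 : x ≤ 1) (hp : p < 1)
    (hu : |u| ≤ M * x ^ (-q)) (hv : |v| ≤ M * x ^ (-(p + q))) :
    |v * Real.log (1 / x) - u / x| ≤ M * (1 / (1 - p) + 1) * x ^ (-(q + 1)) := by
  have hlog := log_one_div_nonneg hx0 hx1
  have hvlog : |v * Real.log (1 / x)| ≤ M / (1 - p) * x ^ (-(q + 1)) :=
    calc |v * Real.log (1 / x)| ≤ M * x ^ (-(p + q)) * (x ^ (-(1 - p)) / (1 - p)) := by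
          rw [abs_mul, abs_of_nonneg hlog]
          exact mul_le_mul hv (log_one_div_le_rpow_neg_div hx0 (by linarith)) hlog
            ((abs_nonneg v).trans hv)
      _ = M / (1 - p) * x ^ (-(q + 1)) := by
          rw [mul_div_assoc', mul_assoc, ← Real.rpow_add hx0]
          ring_nf
  have hudiv : |u / x| ≤ M * x ^ (-(q + 1)) := by
    rw [abs_div, abs_of_pos hx0, div_le_iff₀ hx0, neg_add, Real.rpow_add hx0, Real.rpow_neg_one,
      mul_assoc, inv_mul_cancel_right₀ hx0.ne']
    exact hu
  calc |v * Real.log (1 / x) - u / x| ≤ |v * Real.log (1 / x)| + |u / x| := abs_sub _ _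
    _ ≤ M * (1 / (1 - p) + 1) * x ^ (-(q + 1)) := by
      rw [mul_add, mul_one_div, mul_one, add_mul]
      exact add_le_add hvlog hudiv

theorem Tone_one_riemann_sum_expansion_general
    (W W' : ℝ → ℝ)
    (hA3deriv : ∀ x ∈ Set.Ioo (0:ℝ) 1, HasDerivAt W (W' x) x)
    (M q p : ℝ) (hM : 0 < M) (hq0 : 0 ≤ q) (hq : q < 1/2) (hp : p < 1)
    (hA4W : ∀ x ∈ Set.Ioo (0:ℝ) 1, |W x| ≤ M * x ^ (-q))
    (hA4W' : ∀ x ∈ Set.Ioo (0:ℝ) 1, |W' x| ≤ M * x ^ (-(p + q))) :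
    ∃ C : ℝ, ∀ k : ℕ, 2 ≤ k →
      |(1 / ((k : ℝ) - 1)) * (∑ i ∈ Finset.Icc 1 (k - 1),
          W ((i : ℝ) / k) * Real.log ((k : ℝ) / i)) - muW W| ≤
        C * (k : ℝ) ^ (q - 1) * Real.log k := by
  have hweight : ∀ x ∈ Ioo (0:ℝ) 1,
      |W x * Real.log (1 / x)| ≤ M * (x ^ (-q) * Real.log (1 / x)) := by
    intro x hx
    have hlog := log_one_div_nonneg hx.1 hx.2.le
    rw [abs_mul, abs_of_nonneg hlog, ← mul_assoc]
    exact mul_le_mul_of_nonneg_right (hA4W x hx) hlog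
  have hp' : 0 < 1 - p := by linarith
  obtain ⟨C, hC⟩ := exists_abs_riemann_sum_sub_integral_le (K := M * (1 / (1 - p) + 1))
    hM.le (by positivity) hq0 (by linarith)
    (fun x hx => (hA3deriv x hx).mul_log_one_div hx.1.ne')
    (fun x hx => abs_mul_log_one_div_sub_div_le hx.1 hx.2.le hp (hA4W x hx) (hA4W' x hx))
    hweight
  exact ⟨C, fun k hk => by simpa only [muW, one_div_div] using hC k hk⟩

/-- **Expansion of the Riemann sum `T_n^{(1,1)} = (1/(k−1)) Σ_{i=1}^{k−1} W(i/k) log(k/i)`.**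
Under (A.3)–(A.4), `T_n^{(1,1)} = μ(W) + O(k^{q−1} log k)`: there is a constant `C`
with `|T_n^{(1,1)} − μ(W)| ≤ C k^{q−1} log k` for all `k ≥ 2`. -/
theorem Tone_one_riemann_sum_expansion
    (W W' : ℝ → ℝ)
    (hA3deriv : ∀ x ∈ Set.Ioo (0:ℝ) 1, HasDerivAt W (W' x) x)
    (hA3cont : ContinuousOn W' (Set.Ioo (0:ℝ) 1))
    (M q p : ℝ) (hM : 0 < M) (hq0 : 0 ≤ q) (hq : q < 1/2) (hp : p < 1)
    (hA4W : ∀ x ∈ Set.Ioo (0:ℝ) 1, |W x| ≤ M * x ^ (-q))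
    (hA4W' : ∀ x ∈ Set.Ioo (0:ℝ) 1, |W' x| ≤ M * x ^ (-(p + q))) :
    ∃ C : ℝ, ∀ k : ℕ, 2 ≤ k →
      |(1 / ((k : ℝ) - 1)) * (∑ i ∈ Finset.Icc 1 (k - 1),
          W ((i : ℝ) / k) * Real.log ((k : ℝ) / i)) - muW W| ≤
        C * (k : ℝ) ^ (q - 1) * Real.log k :=
  Tone_one_riemann_sum_expansion_general W W' hA3deriv M q p hM hq0 hq hp hA4W hA4W'
end

section
/- For the score function W(x) = −(log(x) + 1) on (0,1), σ²(W) = ∫₀¹∫₀¹ W(x) W(y) (min(x,y) − xy)/(xy) dx dy = 2. -/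
/-!
For fixed `x`, the inner integral splits at `y = x`, where `min x y` switches from `y` to `x`.
Both pieces have elementary primitives (`∫₀ˣ (log y + 1) dy = x log x`), and the inner integral
equals `-(log³ x + log² x) / 2`. The outer integral then follows from
`∫₀¹ logⁿ x dx = (-1)ⁿ n!`, which is `Γ(n + 1)` after the substitution `x = e^{-t}`:
`-((-6) + 2) / 2 = 2`.
-/

open Real MeasureTheory Set intervalIntegral

theorem image_exp_neg_Ioi_zero : (fun t : ℝ => exp (-t)) '' Ioi 0 = Ioo 0 1 := by
  rw [show (fun t : ℝ => exp (-t)) = exp ∘ Neg.neg from rfl, image_comp, image_neg_Ioi,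
    neg_zero, image_exp_Iio, exp_zero]

theorem hasDerivWithinAt_exp_neg (s : Set ℝ) (t : ℝ) :
    HasDerivWithinAt (fun t : ℝ => exp (-t)) (-exp (-t)) s t := by
  simpa using ((hasDerivAt_neg t).exp).hasDerivWithinAt

theorem injOn_exp_neg : InjOn (fun t : ℝ => exp (-t)) (Ioi 0) :=
  fun _ _ _ _ h => neg_injective (exp_injective h)

theorem integrableOn_Ioo_comp_log_iff (g : ℝ → ℝ) :
    IntegrableOn (fun x => g (log x)) (Ioo 0 1) ↔
      IntegrableOn (fun t => exp (-t) * g (-t)) (Ioi 0) := by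
  rw [← image_exp_neg_Ioi_zero, integrableOn_image_iff_integrableOn_abs_deriv_smul
    measurableSet_Ioi (fun t _ => hasDerivWithinAt_exp_neg _ t) injOn_exp_neg]
  simp [abs_of_pos (exp_pos _)]

theorem integral_Ioo_comp_log (g : ℝ → ℝ) :
    ∫ x in Ioo 0 1, g (log x) = ∫ t in Ioi 0, exp (-t) * g (-t) := by
  rw [← image_exp_neg_Ioi_zero, integral_image_eq_integral_abs_deriv_smul
    measurableSet_Ioi (fun t _ => hasDerivWithinAt_exp_neg _ t) injOn_exp_neg]
  simp [abs_of_pos (exp_pos _)]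

theorem exp_neg_mul_neg_pow (n : ℕ) (t : ℝ) :
    exp (-t) * (-t) ^ n = (-1) ^ n * (exp (-t) * t ^ ((n + 1 : ℝ) - 1)) := by
  rw [add_sub_cancel_right, rpow_natCast, neg_pow]; ring

theorem intervalIntegrable_log_pow (n : ℕ) :
    IntervalIntegrable (fun x => log x ^ n) volume 0 1 := by
  rw [intervalIntegrable_iff_integrableOn_Ioo_of_le zero_le_one,
    integrableOn_Ioo_comp_log_iff (· ^ n)]
  simp_rw [exp_neg_mul_neg_pow]
  exact (GammaIntegral_convergent (by positivity)).const_mul _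

theorem integral_log_pow (n : ℕ) : ∫ x in 0..1, log x ^ n = (-1) ^ n * n.factorial := by
  rw [integral_of_le zero_le_one, integral_Ioc_eq_integral_Ioo,
    integral_Ioo_comp_log (· ^ n)]
  simp_rw [exp_neg_mul_neg_pow]
  rw [MeasureTheory.integral_const_mul, ← Gamma_eq_integral (by positivity),
    Gamma_nat_eq_factorial]

theorem integral_mul_min_sub_mul_div {W : ℝ → ℝ} (hW : IntervalIntegrable W volume 0 1)
    {x : ℝ} (hx : x ∈ Ioc 0 1) :
    ∫ y in 0..1, W y * (min x y - x * y) / (x * y) =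
      (1 - x) / x * (∫ y in 0..x, W y) + ∫ y in x..1, W y * (1 - y) / y := by
  obtain ⟨hx0, hx1⟩ := hx
  have hW₁ : IntervalIntegrable W volume 0 x :=
    hW.mono_set (by rw [uIcc_of_le hx0.le, uIcc_of_le zero_le_one]; gcongr)
  have hW₂ : IntervalIntegrable W volume x 1 :=
    hW.mono_set (by rw [uIcc_of_le hx1, uIcc_of_le zero_le_one]; gcongr)
  have below : EqOn (fun y => W y * (min x y - x * y) / (x * y)) (fun y => (1 - x) / x * W y)
      (Ioc 0 x) := by
    intro y ⟨hy0, hyx⟩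
    simp only [min_eq_right hyx]
    field_simp
  have above : EqOn (fun y => W y * (min x y - x * y) / (x * y)) (fun y => W y * (1 - y) / y)
      (uIcc x 1) := by
    intro y hy
    rw [uIcc_of_le hx1] at hy
    have hy0 : y ≠ 0 := (hx0.trans_le hy.1).ne'
    simp only [min_eq_left hy.1]
    field_simp
  have hint_above : IntervalIntegrable (fun y => W y * (1 - y) / y) volume x 1 := by
    simp_rw [mul_div_assoc]
    refine hW₂.mul_continuousOn (ContinuousOn.div (by fun_prop) continuousOn_id fun y hy => ?_)
    rw [uIcc_of_le hx1] at hy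
    exact (hx0.trans_le hy.1).ne'
  have hint_below : IntervalIntegrable (fun y => W y * (min x y - x * y) / (x * y)) volume 0 x := by
    rw [intervalIntegrable_iff_integrableOn_Ioc_of_le hx0.le] at hW₁ ⊢
    exact IntegrableOn.congr_fun (hW₁.const_mul ((1 - x) / x)) below.symm measurableSet_Ioc
  rw [← integral_add_adjacent_intervals hint_below
      (hint_above.congr (above.mono uIoc_subset_uIcc).symm),
    integral_congr above, integral_of_le hx0.le, setIntegral_congr_fun measurableSet_Ioc below,
    ← integral_of_le hx0.le, intervalIntegral.integral_const_mul]

theorem integral_log_add_one (x : ℝ) : ∫ y in 0..x, (log y + 1) = x * log x := by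
  rw [integral_add intervalIntegrable_log' intervalIntegrable_const, integral_log_from_zero]
  simp

theorem integral_log_add_one_mul_one_sub_div {x : ℝ} (hx : 0 < x) :
    ∫ y in x..1, (log y + 1) * (1 - y) / y = -(log x ^ 2 / 2) - log x + x * log x := by
  have hpos : ∀ y ∈ uIcc x 1, 0 < y := fun y hy =>
    lt_of_lt_of_le (lt_min hx one_pos) hy.1
  have hderiv : ∀ y ∈ uIcc x 1, HasDerivAt (fun t => log t ^ 2 / 2 + log t - t * log t)
      ((log y + 1) * (1 - y) / y) y := by
    intro y hy
    have hy0 := (hpos y hy).ne'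
    have hlog := hasDerivAt_log hy0
    refine (((hlog.pow 2).div_const 2).add hlog |>.sub
      ((hasDerivAt_id y).mul hlog)).congr_deriv ?_
    simp only [id]
    field_simp
    ring
  have hcont : ContinuousOn (fun y => (log y + 1) * (1 - y) / y) (uIcc x 1) :=
    ContinuousOn.div (by fun_prop (disch := exact fun y hy => (hpos y hy).ne'))
      continuousOn_id fun y hy => (hpos y hy).ne'
  rw [integral_eq_sub_of_hasDerivAt hderiv hcont.intervalIntegrable]
  rw [log_one]
  ring

theorem integral_score_kernel {x : ℝ} (hx : x ∈ Ioc 0 1) :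
    ∫ y in 0..1, (-(log x + 1)) * (-(log y + 1)) * (min x y - x * y) / (x * y) =
      -((log x ^ 3 + log x ^ 2) / 2) := by
  have hW : IntervalIntegrable (fun y => log y + 1) volume 0 1 :=
    intervalIntegrable_log'.add intervalIntegrable_const
  simp_rw [neg_mul_neg, mul_assoc (log x + 1), mul_div_assoc (log x + 1)]
  rw [intervalIntegral.integral_const_mul, integral_mul_min_sub_mul_div hW hx,
    integral_log_add_one, integral_log_add_one_mul_one_sub_div hx.1]
  have hx0 : x ≠ 0 := hx.1.ne'
  field_simp
  ring

/-- For the score function `W(x) = −(log(x)+1)`,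
`σ²(W) = ∫₀¹∫₀¹ W(x)W(y)(min(x,y)−xy)/(xy) dx dy = 2`. -/
theorem sigmaSq_zipf_score :
    (∫ x in (0:ℝ)..1, ∫ y in (0:ℝ)..1,
      (-(Real.log x + 1)) * (-(Real.log y + 1)) * (min x y - x * y) / (x * y)) = 2 := by
  calc _ = ∫ x in 0..1, -((log x ^ 3 + log x ^ 2) / 2) :=
        intervalIntegral.integral_congr_ae <| .of_forall fun x hx ↦
          integral_score_kernel (by rwa [uIoc_of_le zero_le_one] at hx)
    _ = 2 := by
      rw [intervalIntegral.integral_neg, intervalIntegral.integral_div,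
        integral_add (intervalIntegrable_log_pow 3) (intervalIntegrable_log_pow 2),
        integral_log_pow, integral_log_pow]
      norm_num [Nat.factorial]
end

section
/- Let F be a cumulative distribution function with F(t) < 1 for all t, H = −log(1−F) and H⁻(t) = inf{x : H(x) ≥ t}, and let θ > 0. Then the following are equivalent: (i) for every λ > 0, log(1−F(λt))/log(1−F(t)) → λ^{1/θ} as t → ∞; (ii) H⁻ is regularly varying at infinity with index θ, i.e. H⁻(t) = t^θ ℓ(t) for some slowly varying function ℓ (ℓ(λt)/ℓ(t) → 1 as t → ∞ for every λ > 0). -/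
open MeasureTheory ProbabilityTheory Filter Set Topology

/-!
The ratio of logarithms in (i) is `H(λt)/H(t)`, so (i) says that `H` is regularly varying
with index `1/θ`. The pair `(H, H⁻)` satisfies `x < H⁻(t) → H(x) ≤ t` and
`H⁻(t) < x → t ≤ H(x)` for large `x, t`, a relation that is symmetric in the two functions.
For such a pair, regular variation of one function with index `ρ > 0` gives regular variation of
the other with index `1/ρ`: comparing `f` at `a·g(s)` and `c·g(s)` with `a` close to `1` squeezes
`g(λs)/g(s)` between constants arbitrarily close to `λ^(1/ρ)`. Both implications are instances
of this, and for the positive function `H⁻` regular variation with index `θ` is the same as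
`H⁻(t) = t^θ ℓ(t)` with `ℓ` slowly varying.
-/

/-- Up to ties, `g t` is where `f` crosses the level `t`, for all large `x` and `t`;
neither function needs to be monotone. -/
def IsGeneralizedInverseAtTop (f g : ℝ → ℝ) : Prop :=
  ∀ᶠ p : ℝ × ℝ in atTop ×ˢ atTop,
    (p.1 < g p.2 → f p.1 ≤ p.2) ∧ (g p.2 < p.1 → p.2 ≤ f p.1)

def IsRegularlyVarying (f : ℝ → ℝ) (ρ : ℝ) : Prop :=
  ∀ l : ℝ, 0 < l → Tendsto (fun t => f (l * t) / f t) atTop (𝓝 (l ^ ρ))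

section RegularVariation

variable {f g : ℝ → ℝ} {ρ : ℝ}

theorem isRegularlyVarying_neg : IsRegularlyVarying (-f) ρ ↔ IsRegularlyVarying f ρ := by
  simp only [IsRegularlyVarying, Pi.neg_apply, neg_div_neg_eq]

theorem IsRegularlyVarying.tendsto_div_comp (hf : IsRegularlyVarying f ρ) {α : Type*}
    {L : Filter α} {φ : α → ℝ} (hφ : Tendsto φ L atTop) {a b : ℝ} (ha : 0 < a) (hb : 0 < b) :
    Tendsto (fun s => f (b * φ s) / f (a * φ s)) L (𝓝 ((b / a) ^ ρ)) := by
  refine ((hf (b / a) (div_pos hb ha)).comp (hφ.const_mul_atTop ha)).congr fun s => ?_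
  simp only [Function.comp_apply, ← mul_assoc, div_mul_cancel₀ b ha.ne']

theorem eventually_div_eq_rpow_mul {ℓ : ℝ → ℝ} {l : ℝ} (hl : 0 < l)
    (hℓ : ∀ᶠ t in atTop, 0 < ℓ t) (hgℓ : ∀ᶠ t in atTop, g t = t ^ ρ * ℓ t) :
    (fun t => g (l * t) / g t) =ᶠ[atTop] fun t => l ^ ρ * (ℓ (l * t) / ℓ t) := by
  filter_upwards [hgℓ, (tendsto_id.const_mul_atTop hl).eventually hgℓ, hℓ,
    eventually_gt_atTop 0] with t hgt hglt hℓt ht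
  have htρ : 0 < t ^ ρ := Real.rpow_pos_of_pos ht ρ
  simp only [id] at hglt
  rw [hgt, hglt, Real.mul_rpow hl.le ht.le]
  field_simp

theorem isRegularlyVarying_iff_exists_slowlyVarying (hg : ∀ᶠ t in atTop, 0 < g t) :
    IsRegularlyVarying g ρ ↔ ∃ ℓ : ℝ → ℝ, (∀ᶠ t in atTop, 0 < ℓ t) ∧ SlowlyVarying ℓ ∧
      ∀ᶠ t in atTop, g t = t ^ ρ * ℓ t := by
  constructor
  · intro hrv
    have hℓ : ∀ᶠ t in atTop, 0 < g t / t ^ ρ := by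
      filter_upwards [hg, eventually_gt_atTop 0] with t hgt ht
      exact div_pos hgt (Real.rpow_pos_of_pos ht ρ)
    have hgℓ : ∀ᶠ t in atTop, g t = t ^ ρ * (g t / t ^ ρ) := by
      filter_upwards [eventually_gt_atTop 0] with t ht
      rw [mul_div_cancel₀ _ (Real.rpow_pos_of_pos ht ρ).ne']
    refine ⟨fun t => g t / t ^ ρ, hℓ, fun l hl => ?_, hgℓ⟩
    have hlρ : l ^ ρ ≠ 0 := (Real.rpow_pos_of_pos hl ρ).ne'
    have h := (hrv l hl).div_const (l ^ ρ)
    rw [div_self hlρ] at h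
    refine h.congr' ?_
    filter_upwards [eventually_div_eq_rpow_mul hl hℓ hgℓ] with t ht
    rw [ht, mul_div_cancel_left₀ _ hlρ]
  · rintro ⟨ℓ, hℓ, hsv, hgℓ⟩ l hl
    simpa using ((hsv l hl).const_mul (l ^ ρ)).congr'
      (eventually_div_eq_rpow_mul hl hℓ hgℓ).symm

end RegularVariation

theorem tendsto_div_of_eventually_bounds {α : Type*} {L : Filter α} {u v : α → ℝ} {q : ℝ}
    (hq : 0 < q) (hv : ∀ᶠ s in L, 0 < v s)
    (hupper : ∀ C, q < C → ∀ᶠ s in L, u s ≤ C * v s)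
    (hlower : ∀ c, 0 < c → c < q → ∀ᶠ s in L, c * v s ≤ u s) :
    Tendsto (fun s => u s / v s) L (𝓝 q) := by
  rw [tendsto_order]
  refine ⟨fun a ha => ?_, fun a ha => ?_⟩
  · obtain ⟨c, hac, hcq⟩ := exists_between (max_lt ha hq : max a 0 < q)
    filter_upwards [hlower c ((le_max_right a 0).trans_lt hac) hcq, hv] with s hs hvs
    exact ((le_max_left a 0).trans_lt hac).trans_le ((le_div_iff₀ hvs).2 hs)
  · obtain ⟨C, hqC, hCa⟩ := exists_between ha
    filter_upwards [hupper C hqC, hv] with s hs hvs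
    exact ((div_le_iff₀ hvs).2 hs).trans_lt hCa

namespace IsGeneralizedInverseAtTop

variable {f g : ℝ → ℝ}

theorem eventually (h : IsGeneralizedInverseAtTop f g) {α : Type*} {L : Filter α}
    {x t : α → ℝ} (hx : Tendsto x L atTop) (ht : Tendsto t L atTop) :
    ∀ᶠ s in L, (x s < g (t s) → f (x s) ≤ t s) ∧ (g (t s) < x s → t s ≤ f (x s)) :=
  (hx.prodMk ht).eventually h

theorem symm (h : IsGeneralizedInverseAtTop f g) : IsGeneralizedInverseAtTop g f := by
  refine (h.eventually tendsto_snd tendsto_fst).mono fun p hp => ⟨fun hlt => ?_, fun hlt => ?_⟩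
  · by_contra! hle
    exact (hp.1 hle).not_gt hlt
  · by_contra! hle
    exact (hp.2 hle).not_gt hlt

theorem tendsto_atTop (h : IsGeneralizedInverseAtTop f g) : Tendsto f atTop atTop := by
  rw [IsGeneralizedInverseAtTop, prod_atTop_atTop_eq, eventually_atTop_prod_self'] at h
  obtain ⟨a, ha⟩ := h
  refine Filter.tendsto_atTop.2 fun T => ?_
  filter_upwards [eventually_ge_atTop a, eventually_gt_atTop (g (max T a))] with x hxa hx
  exact (le_max_left T a).trans ((ha x hxa _ (le_max_right T a)).2 hx)

variable {ρ l : ℝ}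

theorem eventually_le_mul (h : IsGeneralizedInverseAtTop f g) (hf : IsRegularlyVarying f ρ)
    (hρ : 0 < ρ) (hl : 0 < l) {C : ℝ} (hC : l ^ ρ⁻¹ < C) :
    ∀ᶠ s in atTop, g (l * s) ≤ C * g s := by
  have hg := h.symm.tendsto_atTop
  have hlρ : 0 < l ^ ρ⁻¹ := Real.rpow_pos_of_pos hl _
  obtain ⟨r, hlr, hrC⟩ := exists_between hC
  have hr : 0 < r := hlρ.trans hlr
  have hC0 : 0 < C := hr.trans hrC
  have ha : 1 < C / r := (one_lt_div hr).2 hrC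
  have hlr' : l < r ^ ρ := by
    simpa [Real.rpow_inv_rpow hl.le hρ.ne'] using Real.rpow_lt_rpow hlρ.le hlr hρ
  have hratio := hf.tendsto_div_comp hg (zero_lt_one.trans ha) hC0
  rw [div_div_cancel₀ hC0.ne'] at hratio
  filter_upwards [hratio.eventually (eventually_gt_nhds hlr'), hg.eventually_gt_atTop 0,
    eventually_gt_atTop 0, h.eventually (hg.const_mul_atTop (zero_lt_one.trans ha)) tendsto_id,
    h.symm.eventually (tendsto_id.const_mul_atTop hl) (hg.const_mul_atTop hC0)]
    with s hs hgs hs0 hfa hgC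
  have hs_le : s ≤ f (C / r * g s) := hfa.2 (lt_mul_of_one_lt_left hgs ha)
  refine hgC.1 ?_
  calc l * s ≤ l * f (C / r * g s) := mul_le_mul_of_nonneg_left hs_le hl.le
    _ < f (C * g s) := (lt_div_iff₀ (hs0.trans_le hs_le)).1 hs

theorem eventually_mul_le (h : IsGeneralizedInverseAtTop f g) (hf : IsRegularlyVarying f ρ)
    (hρ : 0 < ρ) (hl : 0 < l) {c : ℝ} (hc0 : 0 < c) (hc : c < l ^ ρ⁻¹) :
    ∀ᶠ s in atTop, c * g s ≤ g (l * s) := by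
  have hg := h.symm.tendsto_atTop
  obtain ⟨r, hcr, hrl⟩ := exists_between hc
  have hr : 0 < r := hc0.trans hcr
  have ha : c / r < 1 := (div_lt_one hr).2 hcr
  have ha0 : 0 < c / r := div_pos hc0 hr
  have hrl' : r ^ ρ < l := by
    simpa [Real.rpow_inv_rpow hl.le hρ.ne'] using Real.rpow_lt_rpow hr.le hrl hρ
  have hratio := hf.tendsto_div_comp hg ha0 hc0
  rw [div_div_cancel₀ hc0.ne'] at hratio
  filter_upwards [hratio.eventually (eventually_lt_nhds hrl'), hg.eventually_gt_atTop 0,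
    (h.tendsto_atTop.comp (hg.const_mul_atTop ha0)).eventually_gt_atTop 0,
    h.eventually (hg.const_mul_atTop ha0) tendsto_id,
    h.symm.eventually (tendsto_id.const_mul_atTop hl) (hg.const_mul_atTop hc0)]
    with s hs hgs hfa0 hfa hgc
  have hfa_le : f (c / r * g s) ≤ s := hfa.1 (mul_lt_of_lt_one_left hgs ha)
  refine hgc.2 ?_
  calc f (c * g s) < l * f (c / r * g s) := (div_lt_iff₀ hfa0).1 hs
    _ ≤ l * s := mul_le_mul_of_nonneg_left hfa_le hl.le

theorem isRegularlyVarying (h : IsGeneralizedInverseAtTop f g) (hf : IsRegularlyVarying f ρ)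
    (hρ : 0 < ρ) : IsRegularlyVarying g ρ⁻¹ := fun _ hl =>
  tendsto_div_of_eventually_bounds (Real.rpow_pos_of_pos hl _)
    (h.symm.tendsto_atTop.eventually_gt_atTop 0) (fun _ hC => h.eventually_le_mul hf hρ hl hC)
    (fun _ hc0 hc => h.eventually_mul_le hf hρ hl hc0 hc)

end IsGeneralizedInverseAtTop

theorem Monotone.isGeneralizedInverseAtTop_sInf {f : ℝ → ℝ} (hf : Monotone f)
    (htop : Tendsto f atTop atTop) : IsGeneralizedInverseAtTop f fun t => sInf {x | t ≤ f x} := by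
  filter_upwards [tendsto_snd.eventually (eventually_gt_atTop (f 0))] with ⟨x, t⟩ ht
  have hbdd : BddBelow {x | t ≤ f x} :=
    ⟨0, fun y hy => le_of_not_gt fun hy0 => (hy.trans (hf hy0.le)).not_gt ht⟩
  refine ⟨fun hx => le_of_not_gt fun htx => (csInf_le hbdd htx.le).not_gt hx, fun hx => ?_⟩
  obtain ⟨y, hy, hyx⟩ := exists_lt_of_csInf_lt (htop.eventually_ge_atTop t).exists hx
  exact le_trans hy (hf hyx.le)

section Hazard

variable {F : ℝ → ℝ}

theorem monotone_hazard (hmono : Monotone F) (hlt : ∀ t, F t < 1) : Monotone (hazard F) :=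
  fun _ y hxy => neg_le_neg (Real.log_le_log (sub_pos.2 (hlt y)) (by linarith [hmono hxy]))

theorem tendsto_hazard_atTop (hlt : ∀ t, F t < 1) (htop : Tendsto F atTop (𝓝 1)) :
    Tendsto (hazard F) atTop atTop := by
  have h : Tendsto (fun x => 1 - F x) atTop (𝓝[>] 0) := by
    refine tendsto_nhdsWithin_of_tendsto_nhds_of_eventually_within _ ?_
      (Eventually.of_forall fun x => sub_pos.2 (hlt x))
    simpa using (tendsto_const_nhds (x := (1 : ℝ))).sub htop
  exact tendsto_neg_atBot_atTop.comp (Real.tendsto_log_nhdsGT_zero.comp h)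

end Hazard

/-- **Equivalence of the Weibull-tail conditions.**  For a cdf `F` with `F(t) < 1`
for all `t`, and `θ > 0`, the convergence
`log(1−F(λt))/log(1−F(t)) → λ^{1/θ}` for every `λ > 0` is equivalent to the regular
variation of `H⁻` with index `θ`, i.e. `H⁻(t) = t^θ ℓ(t)` for some slowly varying `ℓ`. -/
theorem weibull_tail_condition_equivalence
    (F : ℝ → ℝ) (hmono : Monotone F) (hlt : ∀ t, F t < 1)
    (htop : Tendsto F atTop (𝓝 1)) (θ : ℝ) (hθ : 0 < θ) :
    (∀ l : ℝ, 0 < l →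
      Tendsto (fun t => Real.log (1 - F (l * t)) / Real.log (1 - F t)) atTop
        (𝓝 (l ^ (1 / θ)))) ↔
    (∃ ℓ : ℝ → ℝ, (∀ᶠ t in atTop, 0 < ℓ t) ∧ SlowlyVarying ℓ ∧
      ∀ᶠ t in atTop, hazardInv F t = t ^ θ * ℓ t) := by
  have hinv : IsGeneralizedInverseAtTop (hazard F) (hazardInv F) :=
    (monotone_hazard hmono hlt).isGeneralizedInverseAtTop_sInf (tendsto_hazard_atTop hlt htop)
  have hneg : IsRegularlyVarying (hazard F) (1 / θ) ↔
      IsRegularlyVarying (fun t => Real.log (1 - F t)) (1 / θ) :=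
    isRegularlyVarying_neg
  rw [← isRegularlyVarying_iff_exists_slowlyVarying
    (hinv.symm.tendsto_atTop.eventually_gt_atTop 0)]
  exact hneg.symm.trans ⟨fun h => by simpa using hinv.isRegularlyVarying h (by positivity),
    fun h => by simpa using hinv.symm.isRegularlyVarying h hθ⟩
end

section
/- For the logistic distribution with 1 − F(x) = 2/(1 + e^x): the failure rate is H(x) = log((1+e^x)/2), its generalized inverse is H⁻(t) = log(2e^t − 1) for t > 0, condition (A.1) holds with Weibull tail-coefficient θ = 1 and ℓ(t) = log(2e^t − 1)/t, and condition (A.2) holds with ρ = −1 and b(t) = −log(2)/t; i.e. log(ℓ(λt)/ℓ(t)) ∼ (−log(2)/t)(1 − 1/λ) as t → ∞, uniformly locally in λ > 1. -/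
open MeasureTheory ProbabilityTheory Filter Set Topology

/- `log (2eᵗ - 1) = t + log 2 + log (1 - e⁻ᵗ/2)`, so `ℓ(t) = 1 + log 2 / t + O(t⁻²)`.
Any `ℓ` of this shape tends to `1`, hence is slowly varying, and `log ℓ(t) = log 2 / t + O(t⁻²)`.
Then `log (ℓ(λt)/ℓ(t)) = log 2 / (λt) - log 2 / t + O(t⁻²)` uniformly in `λ ≥ 1`, and the main
term is exactly `b(t) K₋₁(λ)`, of exact order `1/t` for `λ` bounded away from `1`. -/

open Asymptotics

namespace Real

lemma abs_log_one_sub_le {y : ℝ} (hy : |y| ≤ 1 / 2) : |log (1 - y)| ≤ 2 * |y| := by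
  have h := abs_log_sub_add_sum_range_le (hy.trans_lt one_half_lt_one) 0
  simp only [Finset.range_zero, Finset.sum_empty, zero_add, pow_one] at h
  refine h.trans ?_
  rw [div_le_iff₀ (by linarith)]
  nlinarith [abs_nonneg y]

lemma log_one_add_sub_self_isBigO : (fun x : ℝ => log (1 + x) - x) =O[𝓝 0] fun x => x ^ 2 := by
  refine IsBigO.of_bound 2 ?_
  filter_upwards [eventually_abs_sub_lt 0 one_half_pos] with x hx
  rw [sub_zero] at hx
  have h := abs_log_sub_add_sum_range_le (x := -x) (by rw [abs_neg]; linarith) 1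
  simp only [Finset.range_one, Finset.sum_singleton, zero_add, pow_one, Nat.cast_zero,
    div_one, sub_neg_eq_add, abs_neg] at h
  rw [norm_eq_abs, norm_eq_abs, abs_pow, sq_abs, neg_add_eq_sub] at *
  refine h.trans ?_
  rw [div_le_iff₀ (by linarith)]
  nlinarith [sq_nonneg x, abs_nonneg x]

end Real

lemma Kfun_eq {ρ l : ℝ} (hρ : ρ ≠ 0) (hl : 0 < l) : Kfun ρ l = (l ^ ρ - 1) / ρ := by
  rw [Kfun, integral_rpow (Or.inr ⟨by simpa using hρ, notMem_uIcc_of_lt one_pos hl⟩)]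
  simp

lemma SlowlyVarying.of_tendsto {ℓ : ℝ → ℝ} {c : ℝ} (hc : c ≠ 0) (h : Tendsto ℓ atTop (𝓝 c)) :
    SlowlyVarying ℓ := fun _ hl =>
  div_self hc ▸ (h.comp (tendsto_id.const_mul_atTop hl)).div h hc

section ExpansionInInverse

variable {ℓ : ℝ → ℝ} {L : ℝ} (hℓ : (fun t => ℓ t - 1 - L / t) =O[atTop] fun t => t⁻¹ ^ 2)
include hℓ

lemma isBigO_sub_one_inv : (fun t => ℓ t - 1) =O[atTop] fun t => t⁻¹ := by
  have hsq : (fun t : ℝ => t⁻¹ ^ 2) =O[atTop] fun t => t⁻¹ := by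
    refine IsBigO.of_bound 1 ?_
    filter_upwards [eventually_ge_atTop 1] with t ht
    have h0 : 0 ≤ t⁻¹ := by positivity
    have h1 : t⁻¹ ≤ 1 := inv_le_one_of_one_le₀ ht
    rw [norm_pow, one_mul, Real.norm_of_nonneg h0]
    nlinarith
  have hL : (fun t : ℝ => L / t) =O[atTop] fun t => t⁻¹ := by
    simpa only [div_eq_mul_inv] using (isBigO_refl (fun t : ℝ => t⁻¹) atTop).const_mul_left L
  simpa only [sub_add_cancel] using (hℓ.trans hsq).add hL

lemma tendsto_one_of_isBigO : Tendsto ℓ atTop (𝓝 1) :=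
  tendsto_sub_nhds_zero_iff.1 <| (isBigO_sub_one_inv hℓ).trans_tendsto tendsto_inv_atTop_zero

lemma log_sub_div_isBigO : (fun t => Real.log (ℓ t) - L / t) =O[atTop] fun t => t⁻¹ ^ 2 := by
  have hlog := Real.log_one_add_sub_self_isBigO.comp_tendsto
    (tendsto_sub_nhds_zero_iff.2 (tendsto_one_of_isBigO hℓ))
  have hsum := (hlog.trans ((isBigO_sub_one_inv hℓ).pow 2)).add hℓ
  refine hsum.congr_left fun t => ?_
  simp only [Function.comp_apply, add_sub_cancel]
  ring

lemma exists_abs_log_div_sub_le : ∃ C, ∀ᶠ t in atTop, ∀ l ≥ 1,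
    |Real.log (ℓ (l * t) / ℓ t) - (L / (l * t) - L / t)| ≤ C * t⁻¹ ^ 2 := by
  obtain ⟨C, hCpos, hC⟩ := (log_sub_div_isBigO hℓ).exists_pos
  obtain ⟨T, hT⟩ := eventually_atTop.1 <| hC.bound.and <|
    ((tendsto_one_of_isBigO hℓ).eventually (lt_mem_nhds one_pos)).and (eventually_gt_atTop 0)
  refine ⟨2 * C, ?_⟩
  filter_upwards [eventually_ge_atTop T] with t ht l hl
  obtain ⟨hCt, hℓt, ht0⟩ := hT t ht
  obtain ⟨hClt, hℓlt, -⟩ := hT (l * t) (ht.trans (le_mul_of_one_le_left ht0.le hl))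
  have hinv : (l * t)⁻¹ ≤ t⁻¹ := inv_anti₀ ht0 (le_mul_of_one_le_left ht0.le hl)
  simp only [norm_pow, norm_inv, Real.norm_eq_abs] at hCt hClt
  rw [abs_of_pos ht0] at hCt
  rw [abs_of_pos (show 0 < l * t by positivity)] at hClt
  rw [Real.log_div (by positivity) (by positivity)]
  calc |Real.log (ℓ (l * t)) - Real.log (ℓ t) - (L / (l * t) - L / t)|
      = |(Real.log (ℓ (l * t)) - L / (l * t)) - (Real.log (ℓ t) - L / t)| := by
        congr 1
        ring
    _ ≤ C * (l * t)⁻¹ ^ 2 + C * t⁻¹ ^ 2 := (abs_sub _ _).trans (add_le_add hClt hCt)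
    _ ≤ 2 * C * t⁻¹ ^ 2 := by
        have : (l * t)⁻¹ ^ 2 ≤ t⁻¹ ^ 2 := pow_le_pow_left₀ (by positivity) hinv 2
        nlinarith

theorem secondOrder_of_isBigO (hL : L ≠ 0) : SecondOrder ℓ (fun t => -L / t) (-1) := by
  refine ⟨by simpa using tendsto_const_nhds.div_atTop tendsto_id, fun a c ha _ ε hε => ?_⟩
  obtain ⟨C, hC⟩ := exists_abs_log_div_sub_le hℓ
  have hgap : 0 < ε * |L| * (1 - a⁻¹) := by
    have : a⁻¹ < 1 := inv_lt_one_of_one_lt₀ ha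
    have : 0 < |L| := abs_pos.2 hL
    have : 0 < 1 - a⁻¹ := by linarith
    positivity
  have hsmall : ∀ᶠ t in atTop, C * t⁻¹ ≤ ε * |L| * (1 - a⁻¹) := by
    refine (tendsto_inv_atTop_zero.const_mul C).eventually_le_const ?_
    simpa using hgap
  filter_upwards [hC, hsmall, eventually_gt_atTop 0] with t hCt hCinv ht l hlac
  obtain ⟨hal, -⟩ := hlac
  have hl : 1 < l := ha.trans_le hal
  have hbK : -L / t * Kfun (-1) l = L / (l * t) - L / t := by
    rw [Kfun_eq (by norm_num) (by linarith), Real.rpow_neg_one]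
    field_simp
  have habs : |L / (l * t) - L / t| = |L| * (1 - l⁻¹) * t⁻¹ := by
    have : l⁻¹ < 1 := inv_lt_one_of_one_lt₀ hl
    rw [show L / (l * t) - L / t = -(L * (1 - l⁻¹) * t⁻¹) by field_simp; ring, abs_neg,
      abs_mul, abs_mul, abs_of_pos (show 0 < 1 - l⁻¹ by linarith), abs_of_pos (inv_pos.2 ht)]
  rw [hbK, habs]
  have hal' : l⁻¹ ≤ a⁻¹ := inv_anti₀ (by linarith) hal
  calc _ ≤ C * t⁻¹ ^ 2 := hCt l hl.le
    _ = C * t⁻¹ * t⁻¹ := by ring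
    _ ≤ ε * |L| * (1 - a⁻¹) * t⁻¹ := by gcongr
    _ ≤ ε * (|L| * (1 - l⁻¹) * t⁻¹) := by
        rw [← mul_assoc, ← mul_assoc]
        gcongr

end ExpansionInInverse

lemma logistic_hazard (x : ℝ) :
    hazard (fun x => 1 - 2 / (1 + Real.exp x)) x = Real.log ((1 + Real.exp x) / 2) := by
  rw [hazard, sub_sub_cancel, ← Real.log_inv, inv_div]

lemma logistic_hazardInv {t : ℝ} (ht : 0 < t) :
    hazardInv (fun x => 1 - 2 / (1 + Real.exp x)) t = Real.log (2 * Real.exp t - 1) := by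
  have hpos : 0 < 2 * Real.exp t - 1 := by linarith [Real.one_lt_exp_iff.2 ht]
  have hset : {x | t ≤ hazard (fun x => 1 - 2 / (1 + Real.exp x)) x} =
      Ici (Real.log (2 * Real.exp t - 1)) := by
    ext x
    rw [mem_ofPred_eq, mem_Ici, logistic_hazard, Real.le_log_iff_exp_le (by positivity),
      Real.log_le_iff_le_exp hpos, le_div_iff₀ two_pos]
    constructor <;> intro h <;> linarith
  rw [hazardInv, hset, csInf_Ici]

lemma log_two_mul_exp_sub_one {t : ℝ} (ht : 0 ≤ t) :
    Real.log (2 * Real.exp t - 1) = t + Real.log 2 + Real.log (1 - Real.exp (-t) / 2) := by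
  have hexp : Real.exp (-t) ≤ 1 := Real.exp_le_one_iff.2 (by linarith)
  have hfactor : 2 * Real.exp t - 1 = Real.exp t * 2 * (1 - Real.exp (-t) / 2) := by
    rw [Real.exp_neg]
    field_simp
  rw [hfactor, Real.log_mul (by positivity) (by linarith),
    Real.log_mul (Real.exp_pos t).ne' two_ne_zero, Real.log_exp]

lemma logistic_ell_isBigO :
    (fun t => Real.log (2 * Real.exp t - 1) / t - 1 - Real.log 2 / t) =O[atTop]
      fun t => t⁻¹ ^ 2 := by
  refine IsBigO.of_bound 1 ?_
  filter_upwards [eventually_gt_atTop 0] with t ht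
  have hexp : Real.exp (-t) ≤ t⁻¹ := by
    rw [Real.exp_neg]
    exact inv_anti₀ ht (by linarith [Real.add_one_le_exp t])
  have hlog : |Real.log (1 - Real.exp (-t) / 2)| ≤ Real.exp (-t) := by
    have h := Real.abs_log_one_sub_le (y := Real.exp (-t) / 2) (by
      rw [abs_of_pos (by positivity)]
      linarith [Real.exp_le_one_iff.2 (neg_nonpos.2 ht.le)])
    rwa [abs_of_pos (show 0 < Real.exp (-t) / 2 by positivity),
      mul_div_cancel₀ _ two_ne_zero] at h
  rw [log_two_mul_exp_sub_one ht.le, one_mul, Real.norm_eq_abs, Real.norm_eq_abs,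
    abs_of_pos (pow_pos (inv_pos.2 ht) 2)]
  calc |(t + Real.log 2 + Real.log (1 - Real.exp (-t) / 2)) / t - 1 - Real.log 2 / t|
      = |Real.log (1 - Real.exp (-t) / 2)| * t⁻¹ := by
        rw [← abs_of_pos (inv_pos.2 ht), ← abs_mul]
        congr 1
        field_simp
        ring
    _ ≤ t⁻¹ * t⁻¹ := by gcongr; exact hlog.trans hexp
    _ = t⁻¹ ^ 2 := (sq _).symm

/-- **The logistic distribution is a Weibull tail-distribution.**
For `1 − F(x) = 2/(1+eˣ)`: the failure rate is `H(x) = log((1+eˣ)/2)`, its generalized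
inverse is `H⁻(t) = log(2eᵗ − 1)` for `t > 0`, condition (A.1) holds with `θ = 1` and
`ℓ(t) = log(2eᵗ − 1)/t`, and condition (A.2) holds with `ρ = −1` and `b(t) = −log(2)/t`,
i.e. `log(ℓ(λt)/ℓ(t)) ∼ (−log(2)/t)(1 − 1/λ)` locally uniformly in `λ > 1`. -/
theorem logistic_distribution_weibull_tail :
    let F : ℝ → ℝ := fun x => 1 - 2 / (1 + Real.exp x)
    let ℓ : ℝ → ℝ := fun t => Real.log (2 * Real.exp t - 1) / t
    (∀ x : ℝ, hazard F x = Real.log ((1 + Real.exp x) / 2)) ∧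
    (∀ t : ℝ, 0 < t → hazardInv F t = Real.log (2 * Real.exp t - 1)) ∧
    (∀ t : ℝ, 0 < t → hazardInv F t = t ^ (1 : ℝ) * ℓ t) ∧
    SlowlyVarying ℓ ∧
    SecondOrder ℓ (fun t => -Real.log 2 / t) (-1) := by
  intro F ℓ
  refine ⟨logistic_hazard, fun t => logistic_hazardInv, fun t ht => ?_,
    SlowlyVarying.of_tendsto one_ne_zero (tendsto_one_of_isBigO logistic_ell_isBigO),
    secondOrder_of_isBigO logistic_ell_isBigO (Real.log_pos one_lt_two).ne'⟩
  rw [logistic_hazardInv ht, Real.rpow_one, mul_div_cancel₀ _ ht.ne']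
end
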